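/- Generalisation of HT Logic: Let φ be a σ-sentence and I_w = (I^H, I^T, w) a pointed σ-HT-interpretation, and assume r(s(x)) is finite for every variable x quantified in φ (so all weighted values below are defined). Let α be the weighted σ-sentence over the Boolean semiring 𝔹 = ({0,1}, ∨, ∧, 0, 1) obtained from φ by replacing ⊥, ∨, ∧, →, ∃, ∀ by 0, +, *, →_𝔹, Σ, Π respectively. Then ⟦α⟧_𝔹(I_w) = 1 if and only if I_w ⊨_σ φ. -/

import Mathlib

/-- The two worlds of HT logic. -/
inductive W : Type | H | T
deriving DecidableEq

/-- `W.le w w'` means `w' ≥ w` in the HT order (with `T ≥ H`). -/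
def W.le : W → W → Prop
  | .H, _ => True
  | .T, w' => w' = .T

/-- An HT-interpretation: a pair of sets of (variable-free) atoms with `h ⊆ t`. -/
structure HTI (A : Type*) where
  h : Set A
  t : Set A
  sub : h ⊆ t

/-- The component of a pointed HT-interpretation at world `w`. -/
def HTI.at {A : Type*} (I : HTI A) : W → Set A
  | .H => I.h
  | .T => I.t

/-- σ-formulas over domain `D` and ground atoms `A`; quantifiers are encoded
    by HOAS, each carrying its range `r(s(x))` as a set. -/
inductive Fml (D A : Type) : Type 1
  | bot
  | atom (a : A)
  | impl (φ ψ : Fml D A)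
  | or (φ ψ : Fml D A)
  | and (φ ψ : Fml D A)
  | ex (s : Set D) (b : D → Fml D A)
  | all (s : Set D) (b : D → Fml D A)

/-- HT satisfaction of σ-sentences. -/
def Fml.sat {D A : Type} (I : HTI A) : W → Fml D A → Prop
  | _, .bot => False
  | w, .atom a => a ∈ I.at w
  | w, .impl φ ψ => ∀ w', W.le w w' → (Fml.sat I w' φ → Fml.sat I w' ψ)
  | w, .or φ ψ => Fml.sat I w φ ∨ Fml.sat I w ψ
  | w, .and φ ψ => Fml.sat I w φ ∧ Fml.sat I w ψ
  | w, .ex s b => ∃ ξ ∈ s, Fml.sat I w (b ξ)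
  | w, .all s b => ∀ ξ ∈ s, Fml.sat I w (b ξ)

/-- Weighted σ-formulas over a semiring `R`. -/
inductive WFml (D A R : Type) : Type 1
  | const (k : R)
  | form (φ : Fml D A)
  | wimpl (α β : WFml D A R)
  | add (α β : WFml D A R)
  | mul (α β : WFml D A R)
  | sum (s : Set D) (b : D → WFml D A R)
  | prod (s : Set D) (b : D → WFml D A R)

open Classical in
/-- Value of a weighted σ-sentence over a commutative semiring `R`
    (`∑ᶠ`/`∏ᶠ` are the paper's `Σ`/`Π`; they sum/multiply over the
    support `{ξ ∈ s | value ≠ e_⊕}` resp. `{ξ ∈ s | value ≠ e_⊗}` when finite). -/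
noncomputable def WFml.val {D A R : Type} [CommSemiring R] (I : HTI A) :
    W → WFml D A R → R
  | _, .const k => k
  | w, .form φ => if Fml.sat I w φ then 1 else 0
  | w, .wimpl α β =>
      if ∀ w', W.le w w' → (WFml.val I w' α = 0 ∨ WFml.val I w' β ≠ 0) then 1 else 0
  | w, .add α β => WFml.val I w α + WFml.val I w β
  | w, .mul α β => WFml.val I w α * WFml.val I w β
  | w, .sum s b => ∑ᶠ ξ ∈ s, WFml.val I w (b ξ)
  | w, .prod s b => ∏ᶠ ξ ∈ s, WFml.val I w (b ξ)

/-- The carrier of the Boolean semiring 𝔹 = ({0,1}, ∨, ∧, 0, 1). -/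
inductive B2 : Type | zero | one
deriving DecidableEq

instance : Fintype B2 := Fintype.ofList [.zero, .one] (by intro x; cases x <;> simp)

instance : Zero B2 := ⟨.zero⟩
instance : One B2 := ⟨.one⟩
/-- `+` is `∨`. -/
instance : Add B2 := ⟨fun a b => match a with | .zero => b | .one => .one⟩
/-- `*` is `∧`. -/
instance : Mul B2 := ⟨fun a b => match a with | .one => b | .zero => .zero⟩

/-- The Boolean semiring 𝔹 = ({0,1}, ∨, ∧, 0, 1). -/
instance : CommSemiring B2 where
  add_assoc := by decide
  zero_add := by decide
  add_zero := by decide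
  add_comm := by decide
  mul_assoc := by decide
  one_mul := by decide
  mul_one := by decide
  left_distrib := by decide
  right_distrib := by decide
  zero_mul := by decide
  mul_zero := by decide
  mul_comm := by decide
  nsmul := nsmulRec
  npow := npowRec

/-- The translation replacing `⊥, ∨, ∧, →, ∃, ∀` by `0, +, *, →_𝔹, Σ, Π`. -/
def Fml.toW {D A : Type} : Fml D A → WFml D A B2
  | .bot => .const 0
  | .atom a => .form (.atom a)
  | .impl φ ψ => .wimpl φ.toW ψ.toW
  | .or φ ψ => .add φ.toW ψ.toW
  | .and φ ψ => .mul φ.toW ψ.toW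
  | .ex s b => .sum s (fun ξ => (b ξ).toW)
  | .all s b => .prod s (fun ξ => (b ξ).toW)

/-- "`r(s(x))` is finite for every variable quantified in `φ`". -/
def Fml.finRanges {D A : Type} : Fml D A → Prop
  | .bot => True
  | .atom _ => True
  | .impl φ ψ => φ.finRanges ∧ ψ.finRanges
  | .or φ ψ => φ.finRanges ∧ ψ.finRanges
  | .and φ ψ => φ.finRanges ∧ ψ.finRanges
  | .ex s b => s.Finite ∧ ∀ ξ, (b ξ).finRanges
  | .all s b => s.Finite ∧ ∀ ξ, (b ξ).finRanges

/-! Structural induction on `φ`. Every element of 𝔹 is `0` or `1`, so the condition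
`⟦β⟧ ≠ 0` in `→_𝔹` says `⟦β⟧ = 1`, and `→_𝔹` evaluates exactly like the HT implication.
Over finite ranges `Σ` and `Π` are finite sums and products, i.e. finite disjunctions and
conjunctions in 𝔹. -/

namespace B2

instance : Nontrivial B2 := ⟨⟨0, 1, by decide⟩⟩

lemma ne_zero_iff {b : B2} : b ≠ 0 ↔ b = 1 := by
  revert b; decide

lemma eq_zero_iff_not_eq_one {b : B2} : b = 0 ↔ ¬b = 1 := by
  revert b; decide

lemma add_eq_one_iff {a b : B2} : a + b = 1 ↔ a = 1 ∨ b = 1 := by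
  revert a b; decide

lemma mul_eq_one_iff {a b : B2} : a * b = 1 ↔ a = 1 ∧ b = 1 := by
  revert a b; decide

lemma sum_eq_one_iff {ι : Type*} (t : Finset ι) (f : ι → B2) :
    ∑ i ∈ t, f i = 1 ↔ ∃ i ∈ t, f i = 1 := by
  classical
  induction t using Finset.induction_on with
  | empty => simp
  | insert a t ha ih => simp [Finset.sum_insert ha, add_eq_one_iff, ih]

lemma prod_eq_one_iff {ι : Type*} (t : Finset ι) (f : ι → B2) :
    ∏ i ∈ t, f i = 1 ↔ ∀ i ∈ t, f i = 1 := by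
  classical
  induction t using Finset.induction_on with
  | empty => simp
  | insert a t ha ih => simp [Finset.prod_insert ha, mul_eq_one_iff, ih]

lemma finsum_mem_eq_one_iff {ι : Type*} {s : Set ι} (hs : s.Finite) (f : ι → B2) :
    ∑ᶠ i ∈ s, f i = 1 ↔ ∃ i ∈ s, f i = 1 := by
  rw [← hs.coe_toFinset, finsum_mem_coe_finset, sum_eq_one_iff]
  simp only [Finset.mem_coe]

lemma finprod_mem_eq_one_iff {ι : Type*} {s : Set ι} (hs : s.Finite) (f : ι → B2) :
    ∏ᶠ i ∈ s, f i = 1 ↔ ∀ i ∈ s, f i = 1 := by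
  rw [← hs.coe_toFinset, finprod_mem_coe_finset, prod_eq_one_iff]
  simp only [Finset.mem_coe]

end B2

namespace WFml

variable {D A R : Type} [CommSemiring R] [Nontrivial R] (I : HTI A) (w : W)

lemma val_form_eq_one (φ : Fml D A) : (form φ : WFml D A R).val I w = 1 ↔ φ.sat I w := by
  rw [val]
  split_ifs with h
  · exact iff_of_true rfl h
  · exact iff_of_false zero_ne_one h

lemma val_wimpl_eq_one (α β : WFml D A R) :
    (wimpl α β).val I w = 1 ↔ ∀ w', W.le w w' → α.val I w' = 0 ∨ β.val I w' ≠ 0 := by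
  rw [val]
  split_ifs with h
  · exact iff_of_true rfl h
  · exact iff_of_false zero_ne_one h

end WFml

/-- **Generalisation of HT Logic** (Weighted HT Logic over 𝔹 generalises HT Logic):
    for every σ-sentence `φ` whose quantifier ranges are all finite and every pointed
    σ-HT-interpretation `I_w`, the weighted sentence obtained from `φ` by replacing
    `⊥, ∨, ∧, →, ∃, ∀` by `0, +, *, →_𝔹, Σ, Π` has value `1` in 𝔹 iff `I_w ⊨ φ`. -/
theorem generalisation {D A : Type} (φ : Fml D A) (I : HTI A) (w : W)
    (hfin : φ.finRanges) :
    WFml.val I w φ.toW = 1 ↔ Fml.sat I w φ := by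
  induction φ generalizing w with
  | bot => simp [Fml.toW, WFml.val, Fml.sat]
  | atom a => exact WFml.val_form_eq_one I w _
  | impl φ ψ ihφ ihψ =>
    simp only [Fml.toW, WFml.val_wimpl_eq_one, B2.eq_zero_iff_not_eq_one, B2.ne_zero_iff, Fml.sat]
    refine forall₂_congr fun w' _ => ?_
    simp only [ihφ w' hfin.1, ihψ w' hfin.2, imp_iff_not_or]
  | or φ ψ ihφ ihψ =>
    simp only [Fml.toW, WFml.val, B2.add_eq_one_iff, ihφ w hfin.1, ihψ w hfin.2, Fml.sat]
  | and φ ψ ihφ ihψ =>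
    simp only [Fml.toW, WFml.val, B2.mul_eq_one_iff, ihφ w hfin.1, ihψ w hfin.2, Fml.sat]
  | ex s b ih =>
    simp only [Fml.toW, WFml.val, B2.finsum_mem_eq_one_iff hfin.1, Fml.sat]
    exact exists_congr fun ξ => and_congr_right fun _ => ih ξ w (hfin.2 ξ)
  | all s b ih =>
    simp only [Fml.toW, WFml.val, B2.finprod_mem_eq_one_iff hfin.1, Fml.sat]
    exact forall₂_congr fun ξ _ => ih ξ w (hfin.2 ξ)
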